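/- arXiv:1304.2585 — 2 statements merged into one kernel-verified Lean document; each statement's English description precedes it below -/
import Mathlib

section
/- Let d ≥ 1, let g be a real polynomial in d variables homogeneous of degree n, and let ρ be a real number. Then for every x ∈ ℝ^d with x ≠ 0, Δ(‖x‖^ρ g(x)) = ρ(2n + ρ + d − 2) ‖x‖^{ρ−2} g(x) + ‖x‖^ρ (Δg)(x), where Δ = ∂_1² + ⋯ + ∂_d² is the Laplacian acting on functions on ℝ^d \ {0} and ‖·‖ is the Euclidean norm. -/
open MeasureTheory MvPolynomial Metric

/-- The polynomial Laplacian `Δ = ∂₁² + ⋯ + ∂_d²` as a linear map. -/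
noncomputable def polyLaplacian (d : ℕ) : MvPolynomial (Fin d) ℝ →ₗ[ℝ] MvPolynomial (Fin d) ℝ :=
  ∑ i : Fin d, ((pderiv i).toLinearMap ∘ₗ (pderiv i).toLinearMap)

/-- The Laplacian `Δ = ∂₁² + ⋯ + ∂_d²` of a function on `ℝ^d`, written with
iterated (Fréchet) derivatives in the coordinate directions. -/
noncomputable def fnLaplacian {d : ℕ} (f : EuclideanSpace ℝ (Fin d) → ℝ)
    (x : EuclideanSpace ℝ (Fin d)) : ℝ :=
  ∑ i : Fin d,
    fderiv ℝ (fun y => fderiv ℝ f y (EuclideanSpace.single i 1)) x (EuclideanSpace.single i 1)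

/-!
Every partial derivative of `‖x‖^σ p(x)` is again of this shape:
`∂ⱼ(‖x‖^σ p) = ‖x‖^σ ∂ⱼp + σ ‖x‖^(σ-2) xⱼ p`. Applying this twice and summing over `j` gives
`Δ(‖x‖^σ p) = ‖x‖^σ Δp + σ ‖x‖^(σ-2) ((d + σ - 2) p + 2 E p)` with `E = ∑ⱼ xⱼ ∂ⱼ` the Euler operator,
and Euler's identity `E g = n g` for homogeneous `g` finishes the proof.
-/

theorem polyLaplacian_apply {d : ℕ} (p : MvPolynomial (Fin d) ℝ) :
    polyLaplacian d p = ∑ i, pderiv i (pderiv i p) := by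
  simp [polyLaplacian]

theorem hasFDerivAt_norm_rpow_of_ne_zero {E : Type*} [NormedAddCommGroup E]
    [InnerProductSpace ℝ E] {x : E} (hx : x ≠ 0) (p : ℝ) :
    HasFDerivAt (fun z : E ↦ ‖z‖ ^ p) ((p * ‖x‖ ^ (p - 2)) • innerSL ℝ x) x := by
  apply HasStrictFDerivAt.hasFDerivAt
  convert! (hasStrictFDerivAt_norm_sq x).rpow_const (p := p / 2) (by simp [hx]) using 0
  simp_rw [← Real.rpow_natCast_mul (norm_nonneg _), ← Nat.cast_smul_eq_nsmul ℝ, smul_smul]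
  ring_nf

section NormRpowMulEval

variable {ι : Type*} [Fintype ι]

theorem MvPolynomial.hasFDerivAt_eval_euclidean (p : MvPolynomial ι ℝ) (y : EuclideanSpace ℝ ι) :
    HasFDerivAt (fun z : EuclideanSpace ℝ ι => eval (fun i => z i) p)
      (∑ i, eval (fun k => y k) (pderiv i p) • EuclideanSpace.proj (𝕜 := ℝ) i) y := by
  classical
  induction p using MvPolynomial.induction_on with
  | C a => simpa using hasFDerivAt_const a y
  | add p q hp hq =>
    simp only [map_add, Finset.sum_add_distrib, add_smul]
    exact hp.add hq
  | mul_X p j hp =>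
    simp only [eval_mul, eval_X]
    refine (hp.mul (PiLp.hasFDerivAt_apply 2 y j)).congr_fderiv ?_
    ext v
    simp [pderiv_X, Pi.single_apply, apply_ite (eval _), add_mul, Finset.sum_add_distrib,
      Finset.mul_sum, mul_assoc]

variable (σ : ℝ) (p : MvPolynomial ι ℝ) {y : EuclideanSpace ℝ ι}

theorem differentiableAt_norm_rpow_mul_eval (hy : y ≠ 0) :
    DifferentiableAt ℝ (fun z : EuclideanSpace ℝ ι => ‖z‖ ^ σ * eval (fun i => z i) p) y :=
  ((hasFDerivAt_norm_rpow_of_ne_zero hy σ).mul (hasFDerivAt_eval_euclidean p y)).differentiableAt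

variable [DecidableEq ι]

theorem fderiv_norm_rpow_mul_eval_single (hy : y ≠ 0) (j : ι) :
    fderiv ℝ (fun z : EuclideanSpace ℝ ι => ‖z‖ ^ σ * eval (fun i => z i) p) y
        (EuclideanSpace.single j 1) =
      ‖y‖ ^ σ * eval (fun i => y i) (pderiv j p) +
        σ * (‖y‖ ^ (σ - 2) * eval (fun i => y i) (X j * p)) := by
  have hnorm := hasFDerivAt_norm_rpow_of_ne_zero hy σ
  have heval := hasFDerivAt_eval_euclidean p y
  rw [fderiv_fun_mul hnorm.differentiableAt heval.differentiableAt, hnorm.fderiv, heval.fderiv]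
  simp [EuclideanSpace.inner_single_right]
  ring

theorem fderiv_fderiv_norm_rpow_mul_eval_single {x : EuclideanSpace ℝ ι} (hx : x ≠ 0) (j : ι) :
    fderiv ℝ (fun y => fderiv ℝ (fun z : EuclideanSpace ℝ ι => ‖z‖ ^ σ * eval (fun i => z i) p) y
        (EuclideanSpace.single j 1)) x (EuclideanSpace.single j 1) =
      ‖x‖ ^ σ * eval (fun i => x i) (pderiv j (pderiv j p)) +
        σ * ‖x‖ ^ (σ - 2) * (eval (fun i => x i) p + 2 * (x j * eval (fun i => x i) (pderiv j p))) +
        σ * (σ - 2) * ‖x‖ ^ (σ - 4) * (x j ^ 2 * eval (fun i => x i) p) := by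
  have hfirst : (fun y => fderiv ℝ (fun z : EuclideanSpace ℝ ι => ‖z‖ ^ σ * eval (fun i => z i) p)
      y (EuclideanSpace.single j 1)) =ᶠ[nhds x] fun y => ‖y‖ ^ σ * eval (fun i => y i) (pderiv j p) +
        σ * (‖y‖ ^ (σ - 2) * eval (fun i => y i) (X j * p)) := by
    filter_upwards [isOpen_ne.mem_nhds hx] with y hy using
      fderiv_norm_rpow_mul_eval_single σ p hy j
  rw [hfirst.fderiv_eq, fderiv_fun_add (differentiableAt_norm_rpow_mul_eval σ _ hx)
    ((differentiableAt_norm_rpow_mul_eval _ _ hx).const_mul σ),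
    fderiv_const_mul (differentiableAt_norm_rpow_mul_eval _ _ hx)]
  simp only [add_apply, smul_apply, smul_eq_mul, fderiv_norm_rpow_mul_eval_single _ _ hx]
  simp only [Derivation.leibniz, pderiv_X_self, map_add, map_mul, eval_X, smul_eq_mul, mul_one]
  ring_nf

end NormRpowMulEval

theorem fnLaplacian_norm_rpow_mul_eval {d : ℕ} (σ : ℝ) (p : MvPolynomial (Fin d) ℝ)
    {x : EuclideanSpace ℝ (Fin d)} (hx : x ≠ 0) :
    fnLaplacian (fun y => ‖y‖ ^ σ * eval (fun i => y i) p) x =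
      ‖x‖ ^ σ * eval (fun i => x i) (polyLaplacian d p) +
        σ * ‖x‖ ^ (σ - 2) * ((d + σ - 2) * eval (fun i => x i) p +
          2 * eval (fun i => x i) (∑ i, X i * pderiv i p)) := by
  have hnorm_sq : ∑ i, x i ^ 2 = ‖x‖ ^ 2 := by simp [EuclideanSpace.real_norm_sq_eq]
  have hpow : ‖x‖ ^ (σ - 4) * ‖x‖ ^ 2 = ‖x‖ ^ (σ - 2) := by
    rw [← Real.rpow_natCast, ← Real.rpow_add (norm_pos_iff.mpr hx)]
    ring_nf
  simp only [fnLaplacian, fderiv_fderiv_norm_rpow_mul_eval_single _ _ hx, Finset.sum_add_distrib,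
    ← Finset.mul_sum, polyLaplacian_apply, map_sum, eval_mul, eval_X]
  simp only [mul_add, ← Finset.sum_mul, hnorm_sq, Finset.sum_const,
    Finset.card_univ, Fintype.card_fin, nsmul_eq_mul]
  linear_combination (σ * (σ - 2) * eval (fun i => x i) p) * hpow

theorem laplacian_rpow_mul_homogeneous_general (d n : ℕ) (ρ : ℝ)
    (g : MvPolynomial (Fin d) ℝ) (hg : g.IsHomogeneous n)
    (x : EuclideanSpace ℝ (Fin d)) (hx : x ≠ 0) :
    fnLaplacian (fun y => ‖y‖ ^ ρ * MvPolynomial.eval (fun i => y i) g) x =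
      ρ * (2 * n + ρ + d - 2) * ‖x‖ ^ (ρ - 2) * MvPolynomial.eval (fun i => x i) g +
        ‖x‖ ^ ρ * MvPolynomial.eval (fun i => x i) (polyLaplacian d g) := by
  rw [fnLaplacian_norm_rpow_mul_eval ρ g hx, hg.sum_X_mul_pderiv]
  rw [map_nsmul, nsmul_eq_mul]
  ring

/-- `Δ(‖x‖^ρ g(x)) = ρ(2n + ρ + d − 2)‖x‖^{ρ−2} g(x) + ‖x‖^ρ (Δg)(x)` for `g` homogeneous of
degree `n` and `x ≠ 0`. -/
theorem laplacian_rpow_mul_homogeneous (d n : ℕ) (hd : 1 ≤ d) (ρ : ℝ)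
    (g : MvPolynomial (Fin d) ℝ) (hg : g.IsHomogeneous n)
    (x : EuclideanSpace ℝ (Fin d)) (hx : x ≠ 0) :
    fnLaplacian (fun y => ‖y‖ ^ ρ * MvPolynomial.eval (fun i => y i) g) x =
      ρ * (2 * n + ρ + d - 2) * ‖x‖ ^ (ρ - 2) * MvPolynomial.eval (fun i => x i) g +
        ‖x‖ ^ ρ * MvPolynomial.eval (fun i => x i) (polyLaplacian d g) :=
  laplacian_rpow_mul_homogeneous_general d n ρ g hg x hx
end

section
/- Let d ≥ 2 and n ≥ 0, and let r_n^d = binom(n+d−1, n) be the dimension of the space P_n^d of real homogeneous polynomials of degree n in d variables. There exist points ξ_1, …, ξ_{r_n^d} ∈ S^{d-1} such that the polynomials x ↦ ⟨x, ξ_j⟩^n, for j = 1, …, r_n^d, form a basis of P_n^d. -/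
/-!
A linear functional `f` on polynomials that kills every power `(∑ aᵢ Xᵢ)ⁿ` kills every monomial
of degree `n`: `a ↦ f ((∑ aᵢ Xᵢ)ⁿ)` is the polynomial function `∑_{|s| = n} (n choose s) f(Xˢ) aˢ`,
so this polynomial is zero, and multinomial coefficients do not vanish in characteristic zero.
Hence the `n`-th powers of linear forms span the homogeneous polynomials of degree `n`. Since
`⟨x, rξ⟩ⁿ = rⁿ ⟨x, ξ⟩ⁿ`, the forms `⟨·, ξ⟩` with `ξ` on the unit sphere already suffice, and a
basis of size `dim P_n^d = C(n + d - 1, n)` can be extracted from this spanning family.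
-/

open MvPolynomial Metric

/-- The homogeneous polynomial `x ↦ ⟨x, ξ⟩ⁿ` for a point `ξ ∈ ℝ^d`. -/
noncomputable def innerPow (d n : ℕ) (ξ : EuclideanSpace ℝ (Fin d)) :
    MvPolynomial (Fin d) ℝ :=
  (∑ i : Fin d, MvPolynomial.C (ξ i) * X i) ^ n

open Finset

namespace MvPolynomial

section CommSemiring

variable {σ R : Type*} [CommSemiring R]

lemma monomial_eq_smul_monomial_one (s : σ →₀ ℕ) (r : R) :
    monomial s r = r • monomial s (1 : R) := by
  rw [smul_monomial, smul_eq_mul, mul_one]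

lemma homogeneousSubmodule_eq_span_monomial (n : ℕ) :
    homogeneousSubmodule σ R n =
      Submodule.span R ((fun s ↦ monomial s 1) '' {s | s.degree = n}) :=
  (homogeneousSubmodule_eq_finsupp_supported σ R n).trans
    (AddMonoidAlgebra.supported_eq_span_single R _)

instance [Finite σ] (n : ℕ) : Module.Finite R (homogeneousSubmodule σ R n) :=
  Module.Finite.iff_fg.mpr (homogeneousSubmodule_fg σ R n)

variable [Fintype σ]

lemma sum_smul_X_pow_mem_homogeneousSubmodule (a : σ → R) (n : ℕ) :
    (∑ i, a i • X i : MvPolynomial σ R) ^ n ∈ homogeneousSubmodule σ R n := by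
  have hlin : (∑ i, a i • X i : MvPolynomial σ R) ∈ homogeneousSubmodule σ R 1 :=
    Submodule.sum_mem _ fun i _ ↦ Submodule.smul_mem _ _ (isHomogeneous_X R i)
  exact homogeneousSubmodule_one_pow (σ := σ) (R := R) n ▸ Submodule.pow_mem_pow _ hlin n

variable [DecidableEq σ]

lemma mem_finsuppAntidiag_univ_iff {n : ℕ} {s : σ →₀ ℕ} :
    s ∈ univ.finsuppAntidiag n ↔ s.degree = n := by
  simp [Finsupp.degree_eq_sum]

lemma sum_smul_X_pow_eq_sum_monomial (a : σ → R) (n : ℕ) :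
    (∑ i, a i • X i : MvPolynomial σ R) ^ n =
      ∑ s ∈ univ.finsuppAntidiag n, monomial s (s.multinomial * s.prod fun i m ↦ a i ^ m) := by
  ext s
  rw [coeff_linearCombination_X_pow_of_fintype, coeff_sum]
  simp only [coeff_monomial, sum_ite_eq', mem_finsuppAntidiag_univ_iff, Finsupp.degree]
  rfl

noncomputable def powerFormDual (f : MvPolynomial σ R →ₗ[R] R) (n : ℕ) : MvPolynomial σ R :=
  ∑ s ∈ univ.finsuppAntidiag n, monomial s (s.multinomial * f (monomial s 1))

lemma eval_powerFormDual (f : MvPolynomial σ R →ₗ[R] R) (n : ℕ) (a : σ → R) :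
    eval a (powerFormDual f n) = f ((∑ i, a i • X i) ^ n) := by
  simp only [powerFormDual, sum_smul_X_pow_eq_sum_monomial, map_sum, eval_monomial]
  refine sum_congr rfl fun s _ ↦ ?_
  rw [monomial_eq_smul_monomial_one s (_ * _), map_smul, smul_eq_mul]
  ring

lemma coeff_powerFormDual (f : MvPolynomial σ R →ₗ[R] R) {n : ℕ} {s : σ →₀ ℕ}
    (hs : s.degree = n) :
    coeff s (powerFormDual f n) = s.multinomial * f (monomial s 1) := by
  simp only [powerFormDual, coeff_sum, coeff_monomial, sum_ite_eq',
    mem_finsuppAntidiag_univ_iff, hs, if_true]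

end CommSemiring

theorem finrank_homogeneousSubmodule (σ K : Type*) [Fintype σ] [Field K] (n : ℕ) :
    Module.finrank K (homogeneousSubmodule σ K n) = (Fintype.card σ + n - 1).choose n := by
  classical
  have hdeg : {s : σ →₀ ℕ | s.degree = n} =
      ((univ : Finset σ).finsuppAntidiag n : Set (σ →₀ ℕ)) := by
    ext s
    exact mem_finsuppAntidiag_univ_iff.symm
  rw [homogeneousSubmodule_eq_finsupp_supported, hdeg,
    (AddMonoidAlgebra.supportedEquivFinsupp _).finrank_eq, Module.finrank_finsupp_self]
  simp only [SetLike.coe_sort_coe, Fintype.card_coe, card_finsuppAntidiag_nat_eq_choose, card_univ]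

section CharZero

variable {σ K : Type*} [Fintype σ] [Field K] [CharZero K]

lemma map_monomial_eq_zero_of_forall_map_sum_smul_X_pow (f : MvPolynomial σ K →ₗ[K] K) {n : ℕ}
    (hf : ∀ a : σ → K, f ((∑ i, a i • X i) ^ n) = 0) {s : σ →₀ ℕ} (hs : s.degree = n) :
    f (monomial s 1) = 0 := by
  classical
  have hdual : powerFormDual f n = 0 :=
    MvPolynomial.funext fun a ↦ by rw [eval_powerFormDual, hf, map_zero]
  have hcoeff := coeff_powerFormDual f hs
  rw [hdual, coeff_zero, eq_comm, mul_eq_zero] at hcoeff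
  exact hcoeff.resolve_left (Nat.cast_ne_zero.mpr (Nat.multinomial_pos _ _).ne')

theorem span_range_sum_smul_X_pow (n : ℕ) :
    Submodule.span K (Set.range fun a : σ → K ↦ (∑ i, a i • X i : MvPolynomial σ K) ^ n) =
      homogeneousSubmodule σ K n := by
  refine le_antisymm (Submodule.span_le.mpr ?_) fun p hp ↦ ?_
  · rintro _ ⟨a, rfl⟩
    exact sum_smul_X_pow_mem_homogeneousSubmodule a n
  by_contra hp_notMem
  obtain ⟨f, hfp, hf_map⟩ := Submodule.exists_dual_map_eq_bot_of_notMem hp_notMem inferInstance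
  have hf : ∀ a : σ → K, f ((∑ i, a i • X i) ^ n) = 0 := fun a ↦
    LinearMap.le_ker_iff_map.mpr hf_map (Submodule.subset_span ⟨a, rfl⟩)
  have hle : homogeneousSubmodule σ K n ≤ LinearMap.ker f := by
    rw [homogeneousSubmodule_eq_span_monomial, Submodule.span_le]
    rintro _ ⟨s, hs, rfl⟩
    exact map_monomial_eq_zero_of_forall_map_sum_smul_X_pow f hf hs
  exact hfp (hle hp)

end CharZero

end MvPolynomial

theorem exists_linearIndependent_fin_of_span_range_eq {K V ι : Type*} [DivisionRing K]
    [AddCommGroup V] [Module K V] (v : ι → V) {W : Submodule K V} [Module.Finite K W] {r : ℕ}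
    (hv : Submodule.span K (Set.range v) = W) (hr : Module.finrank K W = r) :
    ∃ g : Fin r → ι, LinearIndependent K (v ∘ g) ∧ Submodule.span K (Set.range (v ∘ g)) = W := by
  obtain ⟨κ, a, -, hspan, hli⟩ := exists_linearIndependent' K v
  rw [hv] at hspan
  let b : Module.Basis κ K W := (Module.Basis.span hli).map (LinearEquiv.ofEq _ _ hspan)
  have : Fintype κ := @Fintype.ofFinite κ (Module.Finite.finite_basis b)
  let e : Fin r ≃ κ := (Fintype.equivFinOfCardEq (hr ▸ Module.finrank_eq_card_basis b).symm).symm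
  refine ⟨a ∘ e, hli.comp e e.injective, ?_⟩
  rw [← hspan, ← EquivLike.range_comp (v ∘ a) e]
  rfl

theorem span_range_sphere_eq_span_range {E M : Type*} [NormedAddCommGroup E] [NormedSpace ℝ E]
    [Nontrivial E] [AddCommGroup M] [Module ℝ M] {g : E → M} {n : ℕ}
    (hg : ∀ (r : ℝ) (x : E), g (r • x) = r ^ n • g x) :
    Submodule.span ℝ (Set.range fun ξ : sphere (0 : E) 1 ↦ g ξ) =
      Submodule.span ℝ (Set.range g) := by
  refine le_antisymm (Submodule.span_mono ?_) (Submodule.span_le.mpr ?_)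
  · rintro _ ⟨ξ, rfl⟩
    exact ⟨ξ, rfl⟩
  rintro _ ⟨x, rfl⟩
  obtain ⟨u, hu, hx⟩ : ∃ u ∈ sphere (0 : E) 1, ‖x‖ • u = x := by
    by_cases hx : x = 0
    · obtain ⟨u, hu⟩ := (NormedSpace.sphere_nonempty (x := (0 : E))).mpr zero_le_one
      exact ⟨u, hu, by simp [hx]⟩
    · exact ⟨‖x‖⁻¹ • x, by simp [norm_smul, hx], smul_inv_smul₀ (norm_ne_zero_iff.mpr hx) x⟩
  rw [← hx, hg]
  exact Submodule.smul_mem _ _ (Submodule.subset_span ⟨⟨u, hu⟩, rfl⟩)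

lemma innerPow_eq_sum_smul_X_pow (d n : ℕ) (ξ : EuclideanSpace ℝ (Fin d)) :
    innerPow d n ξ = (∑ i, ξ i • X i) ^ n := by
  simp only [innerPow, smul_eq_C_mul]

lemma innerPow_smul (d n : ℕ) (r : ℝ) (ξ : EuclideanSpace ℝ (Fin d)) :
    innerPow d n (r • ξ) = r ^ n • innerPow d n ξ := by
  simp only [innerPow_eq_sum_smul_X_pow, PiLp.smul_apply, smul_eq_mul, mul_smul, ← smul_sum,
    smul_pow]

lemma range_innerPow (d n : ℕ) :
    Set.range (innerPow d n) = Set.range fun a : Fin d → ℝ ↦ (∑ i, a i • X i) ^ n := by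
  rw [← (WithLp.toLp_surjective 2).range_comp]
  simp only [Function.comp_def, innerPow_eq_sum_smul_X_pow]

/-- There exist points `ξ_1, …, ξ_r` on the sphere (`r = dim P_n^d = C(n+d−1, n)`) such that
the powers of linear forms `⟨x, ξ_j⟩ⁿ` form a basis of the space `P_n^d` of homogeneous
polynomials of degree `n`. -/
theorem exists_zonal_basis_of_homogeneous (d n : ℕ) (hd : 2 ≤ d) :
    ∃ ξ : Fin ((n + d - 1).choose n) → sphere (0 : EuclideanSpace ℝ (Fin d)) 1,
      LinearIndependent ℝ (fun j => innerPow d n (ξ j : EuclideanSpace ℝ (Fin d))) ∧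
      Submodule.span ℝ (Set.range fun j => innerPow d n (ξ j : EuclideanSpace ℝ (Fin d))) =
        homogeneousSubmodule (Fin d) ℝ n := by
  have : Nonempty (Fin d) := ⟨⟨0, by omega⟩⟩
  have hspan : Submodule.span ℝ (Set.range fun ξ : sphere (0 : EuclideanSpace ℝ (Fin d)) 1 ↦
      innerPow d n ξ) = homogeneousSubmodule (Fin d) ℝ n := by
    rw [span_range_sphere_eq_span_range (innerPow_smul d n), range_innerPow,
      span_range_sum_smul_X_pow]
  have hdim : Module.finrank ℝ (homogeneousSubmodule (Fin d) ℝ n) = (n + d - 1).choose n := by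
    rw [finrank_homogeneousSubmodule, Fintype.card_fin, add_comm]
  obtain ⟨ξ, hξ_indep, hξ_span⟩ := exists_linearIndependent_fin_of_span_range_eq _ hspan hdim
  exact ⟨ξ, hξ_indep, hξ_span⟩
end
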